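/- arXiv:2112.02096 — 3 statements merged into one kernel-verified Lean document; each statement's English description precedes it below -/
import Mathlib

section
/- (Lemma 2, reverse link.) Fix N ≥ 1, K^d ≥ 1, α_u, α_d ∈ (0,1), positive reals G_{ℓ,k'} indexed by a finite set I with distinguished element (0,k) (write G_k = G_{0,k}), μ_SI² > 0 and σ² > 0. Set all uplink powers and the SI power equal to P: P_{ℓ,k'} = P_SI = P. Then as P → ∞, the uplink SQINR S_u(α_u, α_d) converges to α_u G_k N / (Σ_{(ℓ,k')∈I} G_{ℓ,k'} + (1−α_u) G_k + α_d μ_SI² N [1 + α_u α_d (K^d − 1)]); hence the uplink spectral efficiency saturates at the ceiling (26) determined by self-interference and quantization error. -/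
open Filter

/-- Lemma 2, reverse link: with all uplink transmit powers and the SI power
set equal to `P`, as `P → ∞` the uplink SQINR `S_u` converges to the ceiling (26)
determined by self-interference and quantization error. -/
theorem uplink_high_power_ceiling (N Kd : ℕ) (hN : 1 ≤ N) (hKd : 1 ≤ Kd)
    (αu αd : ℝ) (hαu : αu ∈ Set.Ioo (0 : ℝ) 1) (hαd : αd ∈ Set.Ioo (0 : ℝ) 1)
    (I : Type) [Fintype I] (k0 : I) (G : I → ℝ) (hG : ∀ j, 0 < G j)
    (μSI2 σ2 : ℝ) (hμSI2 : 0 < μSI2) (hσ2 : 0 < σ2) :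
    Tendsto
      (fun P : ℝ =>
        αu ^ 2 * G k0 * P * (N : ℝ) ^ 2 /
          (αu ^ 2 * N * ((∑ j, G j * P) + σ2)
            + αu ^ 2 * αd ^ 2 * P * μSI2 * Kd * (N : ℝ) ^ 2
            + αu ^ 2 * αd * (1 - αd) * P * μSI2 * (N : ℝ) ^ 2
            + N * αu * (1 - αu) *
                (G k0 * P + (∑ j, G j * P) + αd * P * μSI2 * N + σ2)))
      atTop
      (nhds (αu * G k0 * N /
        ((∑ j, G j) + (1 - αu) * G k0
          + αd * μSI2 * N * (1 + αu * αd * ((Kd : ℝ) - 1))))) := by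
  obtain ⟨hαu0, hαu1⟩ := hαu
  obtain ⟨hαd0, hαd1⟩ := hαd
  have hN0 : (0 : ℝ) < N := by exact_mod_cast hN
  have hKd1 : (1 : ℝ) ≤ Kd := by exact_mod_cast hKd
  have hS : 0 < ∑ j, G j :=
    Finset.sum_pos (fun j _ => hG j) ⟨k0, Finset.mem_univ k0⟩
  set S : ℝ := ∑ j, G j with hSdef
  set A : ℝ := αu ^ 2 * G k0 * (N : ℝ) ^ 2 with hA
  set B : ℝ := αu ^ 2 * N * S + αu ^ 2 * αd ^ 2 * μSI2 * Kd * (N : ℝ) ^ 2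
      + αu ^ 2 * αd * (1 - αd) * μSI2 * (N : ℝ) ^ 2
      + N * αu * (1 - αu) * (G k0 + S + αd * μSI2 * N) with hB
  set c : ℝ := αu ^ 2 * N * σ2 + N * αu * (1 - αu) * σ2 with hc
  have hBpos : 0 < B := by
    have h1 : 0 < αu ^ 2 * N * S := by positivity
    have h2 : 0 ≤ αu ^ 2 * αd ^ 2 * μSI2 * Kd * (N : ℝ) ^ 2 := by positivity
    have h3 : 0 ≤ αu ^ 2 * αd * (1 - αd) * μSI2 * (N : ℝ) ^ 2 := by
      have : (0:ℝ) ≤ 1 - αd := by linarith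
      positivity
    have h4 : 0 ≤ N * αu * (1 - αu) * (G k0 + S + αd * μSI2 * N) := by
      have h5 : (0:ℝ) ≤ 1 - αu := by linarith
      have h6 : 0 ≤ G k0 + S + αd * μSI2 * N := by
        have := (hG k0).le
        nlinarith [mul_pos (mul_pos hαd0 hμSI2) hN0]
      positivity
    rw [hB]; linarith
  have hcpos : 0 < c := by
    have h5 : (0:ℝ) ≤ 1 - αu := by linarith
    rw [hc]; positivity
  -- D is the claimed denominator; check B = αu * N * D
  set D : ℝ := S + (1 - αu) * G k0 + αd * μSI2 * N * (1 + αu * αd * ((Kd : ℝ) - 1))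
    with hD
  have hBD : B = αu * N * D := by rw [hB, hD]; ring
  have hDpos : 0 < D := by
    have := mul_pos hαu0 hN0
    nlinarith [hBpos]
  -- the limit value agrees
  have hval : A / B = αu * G k0 * N / D := by
    rw [hA, hBD]
    rw [div_eq_div_iff (by positivity) hDpos.ne']
    ring
  rw [hD] at hval
  rw [← hval]
  -- main limit: A*P/(B*P+c) → A/B
  have hlim : Tendsto (fun P : ℝ => A / (B + c / P)) atTop (nhds (A / B)) := by
    have h1 : Tendsto (fun P : ℝ => c / P) atTop (nhds 0) :=
      tendsto_const_nhds.div_atTop tendsto_id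
    have h2 : Tendsto (fun P : ℝ => B + c / P) atTop (nhds B) := by
      simpa using tendsto_const_nhds.add h1
    exact tendsto_const_nhds.div h2 hBpos.ne'
  refine hlim.congr' ?_
  filter_upwards [eventually_gt_atTop (0 : ℝ)] with P hP
  have hden : 0 < B * P + c := by positivity
  have hden2 : 0 < B + c / P := by positivity
  have heq : A / (B + c / P) = A * P / (B * P + c) := by
    rw [div_eq_div_iff hden2.ne' hden.ne']
    field_simp
  rw [heq]
  congr 1
  · rw [hA]; ring
  · rw [hB, hc, hSdef, ← Finset.sum_mul]; ring
end

section
/- (Lemma 3, reverse link power scaling.) Fix K^d ≥ 1, α_u, α_d ∈ (0,1), positive reals G_{ℓ,k'} and fixed energy budgets E_{ℓ,k'} indexed by a finite set I with distinguished element (0,k) (write G_k = G_{0,k}, E_k = E_{0,k}), a fixed SI energy budget E_SI > 0, μ_SI² > 0 and σ² > 0. Scale every power with the number of antennas: P_{ℓ,k'} = E_{ℓ,k'}/N and P_SI = E_SI/N. Then as N → ∞, the uplink SQINR S_u(α_u, α_d; N) converges to α_u G_k E_k / (α_d μ_SI² E_SI [1 + α_u α_d (K^d − 1)] + σ²); in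 particular, the power scaling law eliminates all intra-cell and inter-cell interference in the limit, leaving only self-interference, quantization error and noise (formula (28)). -/
open Filter

/-- Lemma 3, reverse link power scaling: scaling every power with the number
of antennas, `P_{ℓ,k'} = E_{ℓ,k'}/N` and `P_SI = E_SI/N`, as `N → ∞` the uplink SQINR
converges to the limit (28), in which all intra-cell and inter-cell interference is
eliminated and only self-interference, quantization error and noise remain. -/
theorem uplink_power_scaling_limit (Kd : ℕ) (hKd : 1 ≤ Kd)
    (αu αd : ℝ) (hαu : αu ∈ Set.Ioo (0 : ℝ) 1) (hαd : αd ∈ Set.Ioo (0 : ℝ) 1)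
    (I : Type) [Fintype I] (k0 : I)
    (G E : I → ℝ) (hG : ∀ j, 0 < G j) (hE : ∀ j, 0 < E j)
    (ESI μSI2 σ2 : ℝ) (hESI : 0 < ESI) (hμSI2 : 0 < μSI2) (hσ2 : 0 < σ2) :
    Tendsto
      (fun N : ℕ =>
        αu ^ 2 * G k0 * (E k0 / N) * (N : ℝ) ^ 2 /
          (αu ^ 2 * N * ((∑ j, G j * (E j / N)) + σ2)
            + αu ^ 2 * αd ^ 2 * (ESI / N) * μSI2 * Kd * (N : ℝ) ^ 2
            + αu ^ 2 * αd * (1 - αd) * (ESI / N) * μSI2 * (N : ℝ) ^ 2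
            + N * αu * (1 - αu) *
                (G k0 * (E k0 / N) + (∑ j, G j * (E j / N))
                  + αd * (ESI / N) * μSI2 * N + σ2)))
      atTop
      (nhds (αu * G k0 * E k0 /
        (αd * μSI2 * ESI * (1 + αu * αd * ((Kd : ℝ) - 1)) + σ2))) := by
  obtain ⟨hαu0, hαu1⟩ := hαu
  obtain ⟨hαd0, hαd1⟩ := hαd
  set S : ℝ := ∑ j, G j * E j with hS
  have hSpos : 0 < S := Finset.sum_pos (fun j _ => mul_pos (hG j) (hE j)) ⟨k0, Finset.mem_univ k0⟩
  set A : ℝ := αu ^ 2 * G k0 * E k0 with hA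
  set C : ℝ := αu ^ 2 * σ2 + αu ^ 2 * αd ^ 2 * ESI * μSI2 * Kd
      + αu ^ 2 * αd * (1 - αd) * ESI * μSI2
      + αu * (1 - αu) * (αd * ESI * μSI2 + σ2) with hC
  set D : ℝ := αu ^ 2 * S + αu * (1 - αu) * (G k0 * E k0 + S) with hD
  have h1u : (0:ℝ) ≤ 1 - αu := by linarith
  have h1d : (0:ℝ) ≤ 1 - αd := by linarith
  have hCpos : 0 < C := by
    have t1 : 0 < αu ^ 2 * σ2 := by positivity
    have t2 : 0 ≤ αu ^ 2 * αd ^ 2 * ESI * μSI2 * Kd := by positivity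
    have t3 : 0 ≤ αu ^ 2 * αd * (1 - αd) * ESI * μSI2 := by
      have : 0 ≤ αu ^ 2 * αd * ESI * μSI2 := by positivity
      nlinarith
    have t4 : 0 ≤ αu * (1 - αu) * (αd * ESI * μSI2 + σ2) := by
      have h5 : 0 ≤ αd * ESI * μSI2 + σ2 := by positivity
      have : 0 ≤ αu * (1 - αu) := mul_nonneg hαu0.le h1u
      exact mul_nonneg this h5
    rw [hC]; linarith
  have hTpos : 0 < αd * μSI2 * ESI * (1 + αu * αd * ((Kd : ℝ) - 1)) + σ2 := by
    have hK : (1:ℝ) ≤ (Kd : ℝ) := by exact_mod_cast hKd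
    have : 0 ≤ αu * αd * ((Kd : ℝ) - 1) := by
      apply mul_nonneg (mul_nonneg hαu0.le hαd0.le); linarith
    have : 0 ≤ αd * μSI2 * ESI * (1 + αu * αd * ((Kd : ℝ) - 1)) := by
      apply mul_nonneg (by positivity); linarith
    linarith
  have key : Tendsto (fun N : ℕ => A / (C + D * (N : ℝ)⁻¹)) atTop
      (nhds (αu * G k0 * E k0 / (αd * μSI2 * ESI * (1 + αu * αd * ((Kd : ℝ) - 1)) + σ2))) := by
    have hlim : Tendsto (fun N : ℕ => C + D * (N : ℝ)⁻¹) atTop (nhds C) := by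
      have := tendsto_inv_atTop_nhds_zero_nat (𝕜 := ℝ)
      have h2 : Tendsto (fun N : ℕ => D * (N : ℝ)⁻¹) atTop (nhds 0) := by
        simpa using this.const_mul D
      simpa using tendsto_const_nhds.add h2
    have h3 := (tendsto_const_nhds (x := A)).div hlim hCpos.ne'
    convert h3 using 2
    · rfl
    rw [hA, hC, div_eq_div_iff hTpos.ne' hCpos.ne']
    ring
  apply key.congr'
  filter_upwards [eventually_ge_atTop 1] with N hN
  have hN0 : (N : ℝ) ≠ 0 := by positivity
  have hsum : (∑ j, G j * (E j / (N:ℝ))) = S / N := by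
    rw [hS, Finset.sum_div]
    exact Finset.sum_congr rfl fun j _ => by field_simp
  have hden : (αu ^ 2 * N * ((∑ j, G j * (E j / N)) + σ2)
            + αu ^ 2 * αd ^ 2 * (ESI / N) * μSI2 * Kd * (N : ℝ) ^ 2
            + αu ^ 2 * αd * (1 - αd) * (ESI / N) * μSI2 * (N : ℝ) ^ 2
            + N * αu * (1 - αu) *
                (G k0 * (E k0 / N) + (∑ j, G j * (E j / N))
                  + αd * (ESI / N) * μSI2 * N + σ2)) = (C + D * (N:ℝ)⁻¹) * N := by
    rw [hsum, hC, hD]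
    field_simp
    ring
  rw [hden]
  have hnum : αu ^ 2 * G k0 * (E k0 / (N:ℝ)) * (N : ℝ) ^ 2 = A * N := by
    rw [hA]; field_simp
  rw [hnum, mul_div_mul_right _ _ hN0]
end

section
/- (Lemma 3, forward link power scaling.) Fix α_d ∈ (0,1), positive reals G_{ℓ,k} (with G_k = G_{0,k}), per-cell downlink user counts K_ℓ^d ≥ 1, inter-user gains T_{(ℓ,k'),k}, σ_iui² > 0, σ² > 0, and fixed energy budgets E_{ℓ,k'} (with E_k = E_{0,k}) and E^u_{ℓ,k'}. Scale every power with the number of antennas: P_{ℓ,k'} = E_{ℓ,k'}/N and P^u_{ℓ,k'} = E^u_{ℓ,k'}/N. Then as N → ∞, the downlink SQINR S_d(α_d; N) = α_d² G_k P_k N / D_d(α_d; N) converges to α_d² G_k E_k / σ²; in particular, the power scaling law eliminates all intra-cell, inter-cell and full-duplex inter-user interference as well as the quantization noise terms in the limit, leaving only thermal noise (formula (29)). -/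
open Filter

/-- Lemma 3, forward link power scaling: scaling every power with the number
of antennas, `P_{ℓ,k'} = E_{ℓ,k'}/N` and `P^u_{ℓ,k'} = E^u_{ℓ,k'}/N`, as `N → ∞` the
downlink SQINR `S_d(α_d; N) = α_d² G_k P_k N / D_d(α_d; N)` converges to
`α_d² G_k E_k / σ²` (formula (29)): all interference and quantization terms vanish and
only thermal noise remains. -/
theorem downlink_power_scaling_limit
    (αd : ℝ) (hαd : αd ∈ Set.Ioo (0 : ℝ) 1)
    (L : Type) [Fintype L] (ℓ0 : L)
    (Kd Ku : L → ℕ) (hKd : ∀ ℓ, 1 ≤ Kd ℓ) (kSel : ∀ ℓ, Fin (Kd ℓ))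
    (G : L → ℝ) (hG : ∀ ℓ, 0 < G ℓ)
    (E : (Σ ℓ : L, Fin (Kd ℓ)) → ℝ) (hE : ∀ u, 0 < E u)
    (T Eu : (Σ ℓ : L, Fin (Ku ℓ)) → ℝ) (hT : ∀ v, 0 < T v) (hEu : ∀ v, 0 < Eu v)
    (σiui2 σ2 : ℝ) (hσiui2 : 0 < σiui2) (hσ2 : 0 < σ2) :
    Tendsto
      (fun N : ℕ =>
        αd ^ 2 * G ℓ0 * (E ⟨ℓ0, kSel ℓ0⟩ / N) * (N : ℝ) /
          (αd ^ 2 * (∑ u : Σ ℓ : L, Fin (Kd ℓ), G u.1 * (E u / N))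
            + (∑ v : Σ ℓ : L, Fin (Ku ℓ), T v * (Eu v / N) * σiui2)
            + αd * (1 - αd) *
                (∑ ℓ : L, G ℓ * (E ⟨ℓ, kSel ℓ⟩ / N) * ((Kd ℓ : ℝ) + 1))
            + σ2))
      atTop
      (nhds (αd ^ 2 * G ℓ0 * E ⟨ℓ0, kSel ℓ0⟩ / σ2)) := by
  obtain ⟨hα0, hα1⟩ := hαd
  set C : ℝ := αd ^ 2 * G ℓ0 * E ⟨ℓ0, kSel ℓ0⟩ with hC
  set A : ℝ := αd ^ 2 * (∑ u : Σ ℓ : L, Fin (Kd ℓ), G u.1 * E u) with hA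
  set B : ℝ := ∑ v : Σ ℓ : L, Fin (Ku ℓ), T v * Eu v * σiui2 with hB
  set D : ℝ := αd * (1 - αd) * (∑ ℓ : L, G ℓ * E ⟨ℓ, kSel ℓ⟩ * ((Kd ℓ : ℝ) + 1)) with hD
  have key : ∀ᶠ N : ℕ in atTop,
      αd ^ 2 * G ℓ0 * (E ⟨ℓ0, kSel ℓ0⟩ / N) * (N : ℝ) /
          (αd ^ 2 * (∑ u : Σ ℓ : L, Fin (Kd ℓ), G u.1 * (E u / N))
            + (∑ v : Σ ℓ : L, Fin (Ku ℓ), T v * (Eu v / N) * σiui2)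
            + αd * (1 - αd) *
                (∑ ℓ : L, G ℓ * (E ⟨ℓ, kSel ℓ⟩ / N) * ((Kd ℓ : ℝ) + 1))
            + σ2)
      = C / (A / N + B / N + D / N + σ2) := by
    filter_upwards [eventually_ge_atTop 1] with N hN
    have hN0 : (N : ℝ) ≠ 0 := by positivity
    have s1 : (∑ u : Σ ℓ : L, Fin (Kd ℓ), G u.1 * (E u / N))
        = (∑ u : Σ ℓ : L, Fin (Kd ℓ), G u.1 * E u) / N := by
      rw [Finset.sum_div]; exact Finset.sum_congr rfl fun u _ => by ring
    have s2 : (∑ v : Σ ℓ : L, Fin (Ku ℓ), T v * (Eu v / N) * σiui2)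
        = (∑ v : Σ ℓ : L, Fin (Ku ℓ), T v * Eu v * σiui2) / N := by
      rw [Finset.sum_div]; exact Finset.sum_congr rfl fun v _ => by ring
    have s3 : (∑ ℓ : L, G ℓ * (E ⟨ℓ, kSel ℓ⟩ / N) * ((Kd ℓ : ℝ) + 1))
        = (∑ ℓ : L, G ℓ * E ⟨ℓ, kSel ℓ⟩ * ((Kd ℓ : ℝ) + 1)) / N := by
      rw [Finset.sum_div]; exact Finset.sum_congr rfl fun ℓ _ => by ring
    rw [s1, s2, s3, hA, hB, hC, hD]
    congr 1
    · field_simp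
    · ring
  have hden : Tendsto (fun N : ℕ => A / N + B / N + D / N + σ2) atTop (nhds σ2) := by
    have h := (((tendsto_const_div_atTop_nhds_zero_nat A).add
      (tendsto_const_div_atTop_nhds_zero_nat B)).add
      (tendsto_const_div_atTop_nhds_zero_nat D)).add
      (tendsto_const_nhds : Tendsto (fun _ : ℕ => σ2) atTop (nhds σ2))
    simpa using h
  exact Tendsto.congr' (EventuallyEq.symm key) (tendsto_const_nhds.div hden hσ2.ne')
end
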